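/- arXiv:1711.10015 — 8 statements merged into one kernel-verified Lean document; each statement's English description precedes it below -/
import Mathlib

section
/- Let a topological group G act continuously on a Tychonoff space X, and let T be a set of bounded G-uniform functions on X that is invariant under the action (g·f ∈ T for all g ∈ G and f ∈ T, where (g·f)(x) = f(g⁻¹•x)) and separates points and closed sets (for every closed set A ⊆ X and every x ∉ A there is f ∈ T with f(x) ∉ closure(f(A))). Then the initial uniformity U_T on X induced by the maps in T (pulling back the standard uniformity of ℝ) induces the topology of X, is totally bounded, and is an equiuniformity for the action. -/
/-! A uniformity defined as an infimum of pullbacks can be tested one function `f ∈ T` at a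
time. The induced topology is `⨅ f ∈ T, induced f`, which separation of points from closed
sets makes as fine as the topology of `X`; each `f` pulls back a totally bounded uniformity
because its range is bounded; translations are uniformly continuous because invariance puts
`f (g • ·)` back in `T`; and `G`-uniformity of `f` says exactly that `g • ·` tends to the
identity uniformly as `g → 1`, as seen through `f`. -/

open Topology TopologicalSpace

universe u

/-- The initial uniformity on `X` induced by a family `T` of real-valued maps
(pulling back the standard uniformity of `ℝ`). -/
noncomputable def initialUniformity {X : Type u} (T : Set (X → ℝ)) : UniformSpace X :=
  ⨅ f ∈ T, UniformSpace.comap f inferInstance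

open Filter Set Uniformity

theorem biInf_induced_eq_of_separatesPointsFromClosed {X Y : Type*} [t : TopologicalSpace X]
    [TopologicalSpace Y] {T : Set (X → Y)} (hcont : ∀ f ∈ T, Continuous f)
    (hsep : ∀ A : Set X, IsClosed A → ∀ x ∉ A, ∃ f ∈ T, f x ∉ closure (f '' A)) :
    ⨅ f ∈ T, induced f ‹TopologicalSpace Y› = t := by
  refine le_antisymm (fun U hU => ?_) (le_iInf₂ fun f hf => (hcont f hf).le_induced)
  refine (@isOpen_iff_forall_mem_open _ (⨅ f ∈ T, induced f _) U).2 fun x hx => ?_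
  obtain ⟨f, hfT, hfx⟩ := hsep Uᶜ hU.isClosed_compl x (not_not_intro hx)
  refine ⟨f ⁻¹' (closure (f '' Uᶜ))ᶜ,
    fun y hy => not_not.1 fun hyU => hy (subset_closure (mem_image_of_mem f hyU)), ?_, hfx⟩
  have hopen : IsOpen[induced f ‹_›] (f ⁻¹' (closure (f '' Uᶜ))ᶜ) :=
    isOpen_induced isClosed_closure.isOpen_compl
  exact hopen.mono (biInf_le _ hfT)

section initialUniformity

variable {X : Type*} {T : Set (X → ℝ)}

theorem initialUniformity_toTopologicalSpace :
    (initialUniformity T).toTopologicalSpace = ⨅ f ∈ T, induced f inferInstance := by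
  rw [initialUniformity]
  simp_rw [UniformSpace.toTopologicalSpace_iInf]
  rfl

theorem uniformity_initialUniformity :
    𝓤[initialUniformity T] = ⨅ f ∈ T, comap (Prod.map f f) (𝓤 ℝ) := by
  rw [initialUniformity]
  simp_rw [iInf_uniformity]
  rfl

theorem totallyBounded_initialUniformity
    (hbdd : ∀ f ∈ T, TotallyBounded (range f)) :
    TotallyBounded (uniformSpace := initialUniformity T) (univ : Set X) := by
  refine (totallyBounded_iff_ultrafilter (uniformSpace := initialUniformity T)).2
    fun 𝔉 _ => ?_
  rw [initialUniformity]
  simp_rw [cauchy_iInf_uniformSpace', cauchy_comap_uniformSpace]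
  intro f hf
  have hrange : (𝔉.map f : Filter ℝ) ≤ 𝓟 (range f) :=
    le_principal_iff.2 (mem_map.2 (univ_mem' mem_range_self))
  exact totallyBounded_iff_ultrafilter.1 (hbdd f hf) _ hrange

theorem uniformContinuous_initialUniformity_of_comp_mem {X' : Type*} {T' : Set (X' → ℝ)}
    {φ : X → X'} (hφ : ∀ f ∈ T', f ∘ φ ∈ T) :
    UniformContinuous[initialUniformity T, initialUniformity T'] φ := by
  refine uniformContinuous_iInf_rng.2 fun f => uniformContinuous_iInf_rng.2 fun hf => ?_
  exact uniformContinuous_comap' (u := initialUniformity T)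
    (uniformContinuous_iInf_dom (i := f ∘ φ)
      (uniformContinuous_iInf_dom (i := hφ f hf) uniformContinuous_comap))

theorem tendstoUniformly_initialUniformity_iff {α ι : Type*} {F : ι → α → X} {φ : α → X}
    {l : Filter ι} :
    @TendstoUniformly _ _ _ (initialUniformity T) F φ l ↔
      ∀ f ∈ T, TendstoUniformly (fun i => f ∘ F i) (f ∘ φ) l := by
  simp only [tendstoUniformly_iff_tendsto, uniformity_initialUniformity, tendsto_iInf,
    tendsto_comap_iff]
  rfl

end initialUniformity

theorem initialUniformity_is_totallyBounded_equiuniformity_general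
    {G X : Type u} [Group G] [TopologicalSpace G]
    [TopologicalSpace X] [MulAction G X]
    (T : Set (X → ℝ))
    (hcont : ∀ f ∈ T, Continuous f)
    (hbdd : ∀ f ∈ T, ∃ C : ℝ, ∀ x : X, |f x| ≤ C)
    (hGunif : ∀ f ∈ T, ∀ ε : ℝ, 0 < ε → ∃ O ∈ 𝓝 (1 : G),
      ∀ x : X, ∀ g ∈ O, |f x - f (g • x)| < ε)
    (hinv : ∀ g : G, ∀ f ∈ T, (fun x : X => f (g⁻¹ • x)) ∈ T)
    (hsep : ∀ A : Set X, IsClosed A → ∀ x ∉ A, ∃ f ∈ T, f x ∉ closure (f '' A)) :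
    (initialUniformity T).toTopologicalSpace = ‹TopologicalSpace X› ∧
    @TotallyBounded X (initialUniformity T) Set.univ ∧
    (∀ g : G, @UniformContinuous X X (initialUniformity T) (initialUniformity T)
      (fun x : X => g • x)) ∧
    (∀ V ∈ @uniformity X (initialUniformity T), ∃ O ∈ 𝓝 (1 : G),
      ∀ x : X, ∀ g ∈ O, (x, g • x) ∈ V) := by
  refine ⟨?_, ?_, fun g => ?_, fun V hV => ?_⟩
  · rw [initialUniformity_toTopologicalSpace,
      biInf_induced_eq_of_separatesPointsFromClosed hcont hsep]
  · refine totallyBounded_initialUniformity fun f hf => ?_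
    obtain ⟨C, hC⟩ := hbdd f hf
    exact (totallyBounded_Icc (-C) C).subset (range_subset_iff.2 fun x => abs_le.1 (hC x))
  · refine uniformContinuous_initialUniformity_of_comp_mem fun f hf => ?_
    simpa [Function.comp_def] using hinv g⁻¹ f hf
  have hunif : @TendstoUniformly _ _ _ (initialUniformity T)
      (fun (g : G) (x : X) => g • x) id (𝓝 1) := by
    refine tendstoUniformly_initialUniformity_iff.2 fun f hf => ?_
    refine Metric.tendstoUniformly_iff.2 fun ε hε => ?_
    obtain ⟨O, hO, hOf⟩ := hGunif f hf ε hε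
    filter_upwards [hO] with g hg x
    exact hOf x g hg
  obtain ⟨O, hO, hOV⟩ := (hunif V hV).exists_mem
  exact ⟨O, hO, fun x g hg => hOV g hg x⟩

/-- If a topological group `G` acts continuously on a Tychonoff space `X`
and `T` is an invariant set of bounded `G`-uniform functions separating points and closed
sets, then the initial uniformity `U_T` induces the topology of `X`, is totally bounded,
and is an equiuniformity for the action (all translations are uniformly continuous and the
action is bounded). -/
theorem initialUniformity_is_totallyBounded_equiuniformity
    {G X : Type u} [Group G] [TopologicalSpace G] [IsTopologicalGroup G]
    [TopologicalSpace X] [T35Space X] [MulAction G X] [ContinuousSMul G X]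
    (T : Set (X → ℝ))
    (hcont : ∀ f ∈ T, Continuous f)
    (hbdd : ∀ f ∈ T, ∃ C : ℝ, ∀ x : X, |f x| ≤ C)
    (hGunif : ∀ f ∈ T, ∀ ε : ℝ, 0 < ε → ∃ O ∈ 𝓝 (1 : G),
      ∀ x : X, ∀ g ∈ O, |f x - f (g • x)| < ε)
    (hinv : ∀ g : G, ∀ f ∈ T, (fun x : X => f (g⁻¹ • x)) ∈ T)
    (hsep : ∀ A : Set X, IsClosed A → ∀ x ∉ A, ∃ f ∈ T, f x ∉ closure (f '' A)) :
    (initialUniformity T).toTopologicalSpace = ‹TopologicalSpace X› ∧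
    @TotallyBounded X (initialUniformity T) Set.univ ∧
    (∀ g : G, @UniformContinuous X X (initialUniformity T) (initialUniformity T)
      (fun x : X => g • x)) ∧
    (∀ V ∈ @uniformity X (initialUniformity T), ∃ O ∈ 𝓝 (1 : G),
      ∀ x : X, ∀ g ∈ O, (x, g • x) ∈ V) :=
  initialUniformity_is_totallyBounded_equiuniformity_general T hcont hbdd hGunif hinv hsep
end

section
/- Let κ be an infinite cardinal, let G be a κ-narrow topological group acting continuously on a space X, let f : X → ℝ be a bounded G-uniform function, and let T_f = {g·f : g ∈ G} be its orbit, where (g·f)(x) = f(g⁻¹•x). Then the initial pseudouniformity on X induced by the family of maps T_f (generated by the entourages {(x, y) : |h(x) − h(y)| < ε} for h ∈ T_f and ε > 0) has a base of cardinality at most κ. -/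
/-!
If `f` moves by less than `ε` under a neighbourhood `O` of `1` and `S * O = G`, then writing
`g = s * o` gives `s⁻¹ • x = o • g⁻¹ • x`, so `g • f` is `ε`-close to `s • f` in the sup-distance.
Taking `ε = 1 / (n + 1)` for every `n` produces a set `S` of at most `κ` group elements whose
translates of `f` are uniformly dense in the orbit `T_f`. Uniformly `δ`-close functions have
entourages nested up to a factor `3`, so the finite intersections of the entourages of the
`s • f`, `s ∈ S`, at radii `1 / (n + 1)` form a base of the uniformity, and there are at most `κ`
such finite intersections.
-/

open Topology Pointwise Cardinal Uniformity Set Filter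

universe u

/-- The initial (pseudo)uniformity on `X` induced by a family `T` of real-valued maps
(generated by the entourages `{(x, y) | |h x - h y| < ε}` for `h ∈ T`, `ε > 0`). -/
noncomputable def initialPseudoUniformity {X : Type u} (T : Set (X → ℝ)) : UniformSpace X :=
  ⨅ f ∈ T, UniformSpace.comap f inferInstance

section RealEntourage

variable {X : Type u}

def realEntourage (h : X → ℝ) (ε : ℝ) : Set (X × X) := {p | dist (h p.1) (h p.2) < ε}

theorem realEntourage_subset_of_forall_dist_lt {h d : X → ℝ} {δ : ℝ}
    (hd : ∀ x, dist (h x) (d x) < δ) : realEntourage d δ ⊆ realEntourage h (3 * δ) := by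
  intro p hp
  calc dist (h p.1) (h p.2)
      ≤ dist (h p.1) (d p.1) + dist (d p.1) (d p.2) + dist (d p.2) (h p.2) :=
        dist_triangle4 _ _ _ _
    _ < δ + δ + δ := by
        gcongr
        · exact hd p.1
        · exact hp
        · rw [dist_comm]; exact hd p.2
    _ = 3 * δ := by ring

theorem realEntourage_mono (h : X → ℝ) {δ ε : ℝ} (hδε : δ ≤ ε) :
    realEntourage h δ ⊆ realEntourage h ε :=
  fun _ (hp : dist _ _ < δ) => hp.trans_le hδε

theorem hasBasis_uniformity_initialPseudoUniformity (T : Set (X → ℝ)) :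
    𝓤[initialPseudoUniformity T].HasBasis
      (fun p : Σ I : Set T, I → ℝ => p.1.Finite ∧ ∀ h, 0 < p.2 h)
      (fun p => ⋂ h : p.1, realEntourage h (p.2 h)) := by
  have : 𝓤[initialPseudoUniformity T] = ⨅ h : T, comap (Prod.map h h) (𝓤 ℝ) := by
    unfold initialPseudoUniformity
    simp only [iInf_uniformity, uniformity_comap]
    exact (iInf_subtype'' T _).symm
  rw [this]
  exact HasBasis.iInf fun h => Metric.uniformity_basis_dist.comap _

theorem realEntourage_mem_uniformity {T : Set (X → ℝ)} {h : X → ℝ} (hT : h ∈ T) {ε : ℝ}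
    (hε : 0 < ε) : realEntourage h ε ∈ 𝓤[initialPseudoUniformity T] := by
  simpa using (hasBasis_uniformity_initialPseudoUniformity T).mem_of_mem
    (i := ⟨{⟨h, hT⟩}, fun _ => ε⟩) ⟨finite_singleton _, fun _ => hε⟩

theorem exists_iInter_realEntourage_subset {T : Set (X → ℝ)} {ι : Type*} (d : ι → X → ℝ)
    (hd : ∀ h ∈ T, ∀ ε > 0, ∃ i, ∀ x, dist (h x) (d i x) < ε)
    {V : Set (X × X)} (hV : V ∈ 𝓤[initialPseudoUniformity T]) :
    ∃ A : Finset (ι × ℕ), ⋂ q ∈ A, realEntourage (d q.1) (1 / (q.2 + 1)) ⊆ V := by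
  classical
  obtain ⟨⟨I, ε⟩, ⟨hI, hε⟩, hIV⟩ :=
    (hasBasis_uniformity_initialPseudoUniformity T).mem_iff.1 hV
  have approx : ∀ h : I, ∃ q : ι × ℕ,
      realEntourage (d q.1) (1 / (q.2 + 1)) ⊆ realEntourage h (ε h) := by
    intro h
    obtain ⟨n, hn⟩ := exists_nat_one_div_lt (div_pos (hε h) three_pos)
    obtain ⟨i, hi⟩ := hd h (h : T).2 _ (Nat.one_div_pos_of_nat (n := n))
    exact ⟨(i, n), (realEntourage_subset_of_forall_dist_lt hi).trans
      (realEntourage_mono _ (by linarith))⟩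
  choose φ hφ using approx
  have := hI.fintype
  refine ⟨Finset.univ.image φ, (iInter_mono' fun h => ⟨φ h, ?_⟩).trans hIV⟩
  exact (iInter_subset _ (Finset.mem_image_of_mem φ (Finset.mem_univ h))).trans (hφ h)

theorem mk_finset_prod_nat_le {ι : Type u} {κ : Cardinal.{u}} (hκ : ℵ₀ ≤ κ) (hι : #ι ≤ κ) :
    #(Finset (ι × ℕ)) ≤ κ := by
  classical
  calc #(Finset (ι × ℕ)) ≤ #(List (ι × ℕ)) := mk_le_of_surjective List.toFinset_surjective
    _ ≤ max ℵ₀ #(ι × ℕ) := mk_list_le_max _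
    _ ≤ κ := max_le hκ (by simpa using (mul_le_mul' hι hκ).trans (mul_eq_self hκ).le)

theorem exists_uniformity_base_card_le {T : Set (X → ℝ)} {ι : Type u} (d : ι → X → ℝ)
    (hdT : ∀ i, d i ∈ T) (hd : ∀ h ∈ T, ∀ ε > 0, ∃ i, ∀ x, dist (h x) (d i x) < ε)
    {κ : Cardinal.{u}} (hκ : ℵ₀ ≤ κ) (hι : #ι ≤ κ) :
    ∃ B : Set (Set (X × X)), #B ≤ κ ∧ (∀ b ∈ B, b ∈ 𝓤[initialPseudoUniformity T]) ∧
      ∀ V ∈ 𝓤[initialPseudoUniformity T], ∃ b ∈ B, b ⊆ V := by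
  refine ⟨range fun A : Finset (ι × ℕ) => ⋂ q ∈ A, realEntourage (d q.1) (1 / (q.2 + 1)),
    mk_range_le.trans (mk_finset_prod_nat_le hκ hι), ?_, fun V hV => ?_⟩
  · rintro _ ⟨A, rfl⟩
    exact (biInter_finset_mem A).2 fun q _ =>
      realEntourage_mem_uniformity (hdT q.1) Nat.one_div_pos_of_nat
  · obtain ⟨A, hA⟩ := exists_iInter_realEntourage_subset d hd hV
    exact ⟨_, mem_range_self A, hA⟩

end RealEntourage

section Narrow

variable {X Y : Type*} [PseudoMetricSpace Y]

theorem exists_forall_dist_smul_lt_of_mul_eq_univ {G : Type*} [Group G] [MulAction G X]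
    {f : X → Y} {ε : ℝ} {O S : Set G}
    (hO : ∀ x, ∀ g ∈ O, dist (f x) (f (g • x)) < ε) (hSO : S * O = Set.univ) (g : G) :
    ∃ s ∈ S, ∀ x, dist (f (g⁻¹ • x)) (f (s⁻¹ • x)) < ε := by
  obtain ⟨s, hs, o, ho, rfl⟩ : g ∈ S * O := hSO ▸ mem_univ g
  refine ⟨s, hs, fun x => ?_⟩
  have : s⁻¹ • x = o • (s * o)⁻¹ • x := by rw [mul_inv_rev, smul_smul, mul_inv_cancel_left]
  exact this ▸ hO _ o ho

theorem exists_card_le_forall_dist_smul_lt {G : Type u} [Group G] [TopologicalSpace G]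
    [MulAction G X] {κ : Cardinal.{u}} (hκ : ℵ₀ ≤ κ)
    (hnarrow : ∀ O ∈ 𝓝 (1 : G), ∃ S : Set G, #S ≤ κ ∧ S * O = Set.univ) {f : X → Y}
    (hf : ∀ ε > 0, ∃ O ∈ 𝓝 (1 : G), ∀ x, ∀ g ∈ O, dist (f x) (f (g • x)) < ε) :
    ∃ S : Set G, #S ≤ κ ∧
      ∀ g : G, ∀ ε > 0, ∃ s ∈ S, ∀ x, dist (f (g⁻¹ • x)) (f (s⁻¹ • x)) < ε := by
  have hS : ∀ n : ℕ, ∃ S : Set G, #S ≤ κ ∧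
      ∀ g : G, ∃ s ∈ S, ∀ x, dist (f (g⁻¹ • x)) (f (s⁻¹ • x)) < 1 / (n + 1) := by
    intro n
    obtain ⟨O, hO, hfO⟩ := hf _ (Nat.one_div_pos_of_nat (n := n))
    obtain ⟨S, hSκ, hSO⟩ := hnarrow O hO
    exact ⟨S, hSκ, exists_forall_dist_smul_lt_of_mul_eq_univ hfO hSO⟩
  choose S hSκ hSg using hS
  refine ⟨⋃ n, S n, ?_, fun g ε hε => ?_⟩
  · have hunion : #(⋃ n, S n) ≤ ℵ₀ * ⨆ n, #(S n) := by simpa using mk_iUnion_le_lift S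
    exact hunion.trans ((mul_le_mul' hκ (ciSup_le' hSκ)).trans (mul_eq_self hκ).le)
  · obtain ⟨n, hn⟩ := exists_nat_one_div_lt hε
    obtain ⟨s, hs, hsg⟩ := hSg n g
    exact ⟨s, mem_iUnion_of_mem n hs, fun x => (hsg x).trans hn⟩

end Narrow

theorem orbit_pseudoUniformity_hasBase_card_le_general
    {G X : Type u} [Group G] [TopologicalSpace G]
    [MulAction G X]
    (κ : Cardinal.{u}) (hκ : Cardinal.aleph0 ≤ κ)
    (hnarrow : ∀ O ∈ 𝓝 (1 : G), ∃ S : Set G, #S ≤ κ ∧ S * O = Set.univ)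
    (f : X → ℝ)
    (hfu : ∀ ε : ℝ, 0 < ε → ∃ O ∈ 𝓝 (1 : G), ∀ x : X, ∀ g ∈ O, |f x - f (g • x)| < ε) :
    ∃ B : Set (Set (X × X)), #B ≤ κ ∧
      (∀ b ∈ B, b ∈ @uniformity X
        (initialPseudoUniformity {h : X → ℝ | ∃ g : G, h = fun x => f (g⁻¹ • x)})) ∧
      (∀ V ∈ @uniformity X
        (initialPseudoUniformity {h : X → ℝ | ∃ g : G, h = fun x => f (g⁻¹ • x)}),
        ∃ b ∈ B, b ⊆ V) := by
  obtain ⟨S, hSκ, hS⟩ := exists_card_le_forall_dist_smul_lt hκ hnarrow (f := f)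
    fun ε hε => by simpa only [Real.dist_eq] using hfu ε hε
  refine exists_uniformity_base_card_le (fun s : S => fun x => f ((s : G)⁻¹ • x))
    ?_ ?_ hκ hSκ
  · exact fun s => ⟨s, rfl⟩
  · rintro _ ⟨g, rfl⟩ ε hε
    obtain ⟨s, hs, hsg⟩ := hS g ε hε
    exact ⟨⟨s, hs⟩, hsg⟩

/-- Let `κ` be an infinite cardinal, `G` a `κ`-narrow topological group
acting continuously on `X`, `f : X → ℝ` a bounded `G`-uniform function, and
`T_f = {g·f : g ∈ G}` its orbit (where `(g·f)(x) = f (g⁻¹ • x)`).  Then the initial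
pseudouniformity on `X` induced by `T_f` has a base of cardinality at most `κ`. -/
theorem orbit_pseudoUniformity_hasBase_card_le
    {G X : Type u} [Group G] [TopologicalSpace G] [IsTopologicalGroup G]
    [TopologicalSpace X] [MulAction G X] [ContinuousSMul G X]
    (κ : Cardinal.{u}) (hκ : Cardinal.aleph0 ≤ κ)
    (hnarrow : ∀ O ∈ 𝓝 (1 : G), ∃ S : Set G, #S ≤ κ ∧ S * O = Set.univ)
    (f : X → ℝ) (hfc : Continuous f) (hfb : ∃ C : ℝ, ∀ x : X, |f x| ≤ C)
    (hfu : ∀ ε : ℝ, 0 < ε → ∃ O ∈ 𝓝 (1 : G), ∀ x : X, ∀ g ∈ O, |f x - f (g • x)| < ε) :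
    ∃ B : Set (Set (X × X)), #B ≤ κ ∧
      (∀ b ∈ B, b ∈ @uniformity X
        (initialPseudoUniformity {h : X → ℝ | ∃ g : G, h = fun x => f (g⁻¹ • x)})) ∧
      (∀ V ∈ @uniformity X
        (initialPseudoUniformity {h : X → ℝ | ∃ g : G, h = fun x => f (g⁻¹ • x)}),
        ∃ b ∈ B, b ⊆ V) :=
  orbit_pseudoUniformity_hasBase_card_le_general κ hκ hnarrow f hfu
end

section
/- Let κ be an infinite cardinal, let G be a κ-narrow topological group, and let X be a G-Tychonoff G-space whose topology has a basis of cardinality at most κ. Then there exist a compact Hausdorff space B with a continuous G-action whose topology has a basis of cardinality at most κ, and a topological embedding f : X → B which is equivariant, i.e. f(g•x) = g•f(x) for all g ∈ G and x ∈ X. -/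
/-!
Let `j : X → C` be an equivariant embedding into a compact Hausdorff `G`-space. Indexing by pairs of
elements of a basis of `X`, one finds `κ` functions in `C(C, ℝ)` whose sublevel sets, pulled back
to `X`, form a base of `X`. By `κ`-narrowness the orbit of each of them under translation is
`κ`-separable in the sup metric, so they lie in a family `D`, `#D ≤ κ`, whose closure is
translation invariant. Identifying the points of `C` that `D` does not separate gives a compact
Hausdorff quotient `B` embedded in `ℝ^D`, hence of weight `≤ κ`; the action descends to `B` by
the invariance of `D`, continuously because `C → B` is proper, and `X` still embeds in `B`.
-/

open Topology TopologicalSpace Pointwise Cardinal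

universe u

def IsGTychonoff (G X : Type u) [Group G] [TopologicalSpace G] [TopologicalSpace X]
    [MulAction G X] : Prop :=
  ∃ (C : Type u) (_ : TopologicalSpace C) (_ : MulAction G C),
    CompactSpace C ∧ T2Space C ∧ ContinuousSMul G C ∧
    ∃ j : X → C, IsEmbedding j ∧ DenseRange j ∧ ∀ (g : G) (x : X), j (g • x) = g • j x

theorem Cardinal.mk_iUnion_le_of_forall_le {α ι : Type u} {κ : Cardinal.{u}} (hκ : ℵ₀ ≤ κ)
    (hι : #ι ≤ κ) {s : ι → Set α} (hs : ∀ i, #(s i) ≤ κ) : #(⋃ i, s i) ≤ κ :=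
  (mk_iUnion_le s).trans <| (mul_le_mul' hι (ciSup_le' hs)).trans (mul_eq_self hκ).le

theorem Cardinal.mk_setOf_finite_subset_le {α : Type u} (s : Set α) :
    #{f : Set α | f.Finite ∧ f ⊆ s} ≤ max ℵ₀ #s := by
  have hsub : {f : Set α | f.Finite ∧ f ⊆ s} ⊆
      Set.range fun F : Finset s => Subtype.val '' (F : Set s) := by
    rintro f ⟨hf, hfs⟩
    refine ⟨(hf.preimage Subtype.val_injective.injOn).toFinset, ?_⟩
    simpa using hfs
  classical
  calc #{f : Set α | f.Finite ∧ f ⊆ s}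
      ≤ #(Finset s) := (mk_le_mk_of_subset hsub).trans mk_range_le
    _ ≤ #(List s) := mk_le_of_surjective List.toFinset_surjective
    _ ≤ max ℵ₀ #s := mk_list_le_max s

theorem TopologicalSpace.exists_isTopologicalBasis_card_le_of_eq_generateFrom {α : Type u}
    [t : TopologicalSpace α] {s : Set (Set α)} (hs : t = generateFrom s) {κ : Cardinal.{u}}
    (hκ : ℵ₀ ≤ κ) (hsκ : #s ≤ κ) : ∃ b : Set (Set α), #b ≤ κ ∧ IsTopologicalBasis b :=
  ⟨_, mk_image_le.trans <| (mk_setOf_finite_subset_le s).trans (max_le hκ hsκ),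
    isTopologicalBasis_of_subbasis hs⟩

theorem Topology.IsInducing.exists_isTopologicalBasis_card_le {X ι : Type u} {Y : ι → Type*}
    [TopologicalSpace X] [∀ i, TopologicalSpace (Y i)] [∀ i, SecondCountableTopology (Y i)]
    {e : X → ∀ i, Y i} (he : IsInducing e) {κ : Cardinal.{u}} (hκ : ℵ₀ ≤ κ) (hι : #ι ≤ κ) :
    ∃ b : Set (Set X), #b ≤ κ ∧ IsTopologicalBasis b := by
  refine exists_isTopologicalBasis_card_le_of_eq_generateFrom
    (s := ⋃ i, Set.preimage (fun x => e x i) '' countableBasis (Y i)) ?_ hκ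
    (mk_iUnion_le_of_forall_le hκ hι fun i =>
      (((countable_countableBasis _).image _).le_aleph0).trans hκ)
  simp only [he.eq_induced, Pi.topologicalSpace, induced_iInf, induced_compose, generateFrom_iUnion,
    ← induced_generateFrom_eq, ← eq_generateFrom_countableBasis]
  rfl

namespace ContinuousMap

variable {G C β : Type*} [Group G] [TopologicalSpace C] [MulAction G C]

section ContinuousConstSMul

variable [ContinuousConstSMul G C]

def translate [TopologicalSpace β] (g : G) (f : C(C, β)) : C(C, β) :=
  f.comp ⟨(g⁻¹ • ·), continuous_const_smul _⟩

@[simp]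
theorem translate_apply [TopologicalSpace β] (g : G) (f : C(C, β)) (c : C) :
    f.translate g c = f (g⁻¹ • c) :=
  rfl

@[simp]
theorem translate_one [TopologicalSpace β] (f : C(C, β)) : f.translate (1 : G) = f := by
  ext; simp

theorem translate_mul [TopologicalSpace β] (g h : G) (f : C(C, β)) :
    f.translate (g * h) = (f.translate h).translate g := by
  ext; simp [mul_smul]

theorem dist_translate_le [PseudoMetricSpace β] [CompactSpace C] (g : G) (f f' : C(C, β)) :
    dist (f.translate g) (f'.translate g) ≤ dist f f' :=
  (dist_le dist_nonneg).2 fun c => dist_apply_le_dist (g⁻¹ • c)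

end ContinuousConstSMul

theorem continuous_translate [TopologicalSpace β] [TopologicalSpace G] [IsTopologicalGroup G]
    [ContinuousSMul G C] (f : C(C, β)) : Continuous fun g : G => f.translate g :=
  (curry ⟨fun p : G × C => f (p.1⁻¹ • p.2), by fun_prop⟩).continuous

end ContinuousMap

theorem exists_card_le_range_subset_closure_image_of_narrow {G : Type u} {M : Type*} [Group G]
    [TopologicalSpace G] [PseudoMetricSpace M] {κ : Cardinal.{u}} (hκ : ℵ₀ ≤ κ)
    (hnarrow : ∀ O ∈ 𝓝 (1 : G), ∃ S : Set G, #S ≤ κ ∧ S * O = Set.univ) {F : G → M}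
    (hF : ContinuousAt F 1) (hFdist : ∀ s o, dist (F (s * o)) (F s) ≤ dist (F o) (F 1)) :
    ∃ T : Set G, #T ≤ κ ∧ Set.range F ⊆ closure (F '' T) := by
  have hball (n : ℕ) : F ⁻¹' Metric.ball (F 1) (1 / (n + 1)) ∈ 𝓝 (1 : G) :=
    hF (Metric.ball_mem_nhds _ Nat.one_div_pos_of_nat)
  choose S hSκ hS using fun n => hnarrow _ (hball n)
  refine ⟨⋃ n : ULift.{u} ℕ, S n.down,
    mk_iUnion_le_of_forall_le hκ (mk_le_aleph0.trans hκ) fun n => hSκ n.down, ?_⟩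
  rintro _ ⟨g, rfl⟩
  refine Metric.mem_closure_iff.2 fun ε hε => ?_
  obtain ⟨n, hn⟩ := exists_nat_one_div_lt hε
  obtain ⟨s, hs, o, ho, rfl⟩ : g ∈ S n * (F ⁻¹' Metric.ball (F 1) (1 / (n + 1))) := by
    rw [hS n]; trivial
  refine ⟨F s, ⟨s, Set.mem_iUnion.2 ⟨⟨n⟩, hs⟩, rfl⟩, ?_⟩
  calc dist (F (s * o)) (F s) ≤ dist (F o) (F 1) := hFdist s o
    _ < 1 / (n + 1) := ho
    _ < ε := hn

open ContinuousMap in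
theorem exists_translate_invariant_family {G C ι : Type u} [Group G] [TopologicalSpace G]
    [IsTopologicalGroup G] [TopologicalSpace C] [CompactSpace C] [MulAction G C]
    [ContinuousSMul G C] {κ : Cardinal.{u}} (hκ : ℵ₀ ≤ κ)
    (hnarrow : ∀ O ∈ 𝓝 (1 : G), ∃ S : Set G, #S ≤ κ ∧ S * O = Set.univ) (hι : #ι ≤ κ)
    (φ : ι → C(C, ℝ)) :
    ∃ D : Set C(C, ℝ), #D ≤ κ ∧ Set.range φ ⊆ D ∧ ∀ f ∈ D, ∀ g : G, f.translate g ∈ closure D := by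
  have horbit (i : ι) : ∃ T : Set G, #T ≤ κ ∧
      Set.range ((φ i).translate ·) ⊆ closure (((φ i).translate ·) '' T) :=
    exists_card_le_range_subset_closure_image_of_narrow hκ hnarrow
      ((φ i).continuous_translate.continuousAt) fun s o => by
        simpa only [translate_mul, translate_one] using dist_translate_le s _ _
  choose T hTκ hT using horbit
  refine ⟨⋃ i, ((φ i).translate ·) '' insert 1 (T i), ?_, ?_, ?_⟩
  · refine mk_iUnion_le_of_forall_le hκ hι fun i => mk_image_le.trans ?_
    exact (mk_insert_le).trans (add_le_of_le hκ (hTκ i) (one_le_aleph0.trans hκ))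
  · rintro _ ⟨i, rfl⟩
    exact Set.mem_iUnion.2 ⟨i, 1, Set.mem_insert _ _, translate_one _⟩
  · simp only [Set.mem_iUnion, Set.mem_image]
    rintro _ ⟨i, t, -, rfl⟩ g
    rw [← translate_mul]
    refine closure_mono ?_ (hT i ⟨g * t, rfl⟩)
    exact (Set.image_mono (Set.subset_insert _ _)).trans (Set.subset_iUnion_of_subset i le_rfl)

theorem Topology.IsInducing.exists_sublevel_subset_nhds {X C : Type*} [TopologicalSpace X]
    [TopologicalSpace C] [CompletelyRegularSpace C] {j : X → C} (hj : IsInducing j) {x : X}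
    {V : Set X} (hV : V ∈ 𝓝 x) : ∃ f : C(C, ℝ), f (j x) < 1 ∧ {y | f (j y) < 1} ⊆ V := by
  rw [hj.nhds_eq_comap] at hV
  obtain ⟨W, hW, hWV⟩ := hV
  obtain ⟨f, hf, hfx, hf1⟩ := CompletelyRegularSpace.completely_regular (j x) (interior W)ᶜ
    isOpen_interior.isClosed_compl (by simpa using mem_interior_iff_mem_nhds.2 hW)
  refine ⟨⟨fun c => f c, continuous_subtype_val.comp hf⟩, by simp [hfx], fun y hy => hWV ?_⟩
  by_contra hyW
  have : f (j y) = 1 := hf1 fun h => hyW (interior_subset (s := W) h)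
  simp [this] at hy

theorem Topology.IsInducing.exists_sublevel_subset_nhds_family {X C : Type*} [TopologicalSpace X]
    [TopologicalSpace C] [CompletelyRegularSpace C] {j : X → C} (hj : IsInducing j)
    {S : Set (Set X)} (hS : IsTopologicalBasis S) :
    ∃ φ : S × S → C(C, ℝ), ∀ x, ∀ V ∈ 𝓝 x, ∃ p, φ p (j x) < 1 ∧ {y | φ p (j y) < 1} ⊆ V := by
  -- `φ (U, V)` is a function whose sublevel set `{φ ∘ j < 1}` lies between `U` and `V`, if any.
  let P (p : S × S) (f : C(C, ℝ)) : Prop :=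
    (p.1 : Set X) ⊆ {y | f (j y) < 1} ∧ {y | f (j y) < 1} ⊆ p.2
  refine ⟨fun p => Classical.epsilon (P p), fun x V hV => ?_⟩
  obtain ⟨V', hV'S, hxV', hV'V⟩ := hS.mem_nhds_iff.1 hV
  obtain ⟨f, hfx, hfV'⟩ := hj.exists_sublevel_subset_nhds (hS.mem_nhds hV'S hxV')
  obtain ⟨U, hUS, hxU, hUf⟩ := hS.exists_subset_of_mem_open hfx
    (isOpen_lt (f.continuous.comp hj.continuous) continuous_const)
  have hP := Classical.epsilon_spec (p := P (⟨U, hUS⟩, ⟨V', hV'S⟩)) ⟨f, hUf, hfV'⟩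
  exact ⟨(⟨U, hUS⟩, ⟨V', hV'S⟩), hP.1 hxU, hP.2.trans hV'V⟩

theorem isInducing_pi_of_sublevel_subset_nhds {X ι : Type*} [TopologicalSpace X]
    {φ : ι → X → ℝ} (hφ : ∀ i, Continuous (φ i))
    (h : ∀ x, ∀ V ∈ 𝓝 x, ∃ i, φ i x < 1 ∧ {y | φ i y < 1} ⊆ V) :
    IsInducing fun x i => φ i x := by
  refine isInducing_iff_nhds.2 fun x =>
    le_antisymm (continuous_pi hφ).continuousAt.le_comap fun V hV => ?_
  obtain ⟨i, hxi, hiV⟩ := h x V hV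
  exact ⟨{z | z i < 1}, (isOpen_lt (continuous_apply i) continuous_const).mem_nhds hxi, hiV⟩

section QuotientAction

variable {G C : Type*} [Group G] [MulAction G C]

abbrev quotientMulAction (s : Setoid C) (hs : ∀ (g : G) {x y : C}, s x y → s (g • x) (g • y)) :
    MulAction G (Quotient s) where
  smul g := Quotient.map (g • ·) fun _ _ => hs g
  one_smul := Quotient.ind fun c => congrArg _ (one_smul G c)
  mul_smul g h := Quotient.ind fun c => congrArg _ (mul_smul g h c)

theorem continuousSMul_quotient [TopologicalSpace G] [TopologicalSpace C] [CompactSpace C]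
    [ContinuousSMul G C] (s : Setoid C) (hs : ∀ (g : G) {x y : C}, s x y → s (g • x) (g • y))
    [T2Space (Quotient s)] :
    letI := quotientMulAction s hs
    ContinuousSMul G (Quotient s) := by
  let _ := quotientMulAction s hs
  -- A product of a quotient map with `id` need not be a quotient map; a proper one is.
  have hq : IsQuotientMap (Prod.map id (Quotient.mk s) : G × C → G × Quotient s) :=
    (isProperMap_id.prodMap continuous_quotient_mk'.isProperMap).isClosedMap.isQuotientMap
      (continuous_id.prodMap continuous_quotient_mk')
      (Function.surjective_id.prodMap Quotient.mk_surjective)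
  exact ⟨hq.continuous_iff.2 (continuous_quotient_mk'.comp continuous_smul)⟩

end QuotientAction

theorem isClosedEmbedding_kerLift {C Y : Type*} [TopologicalSpace C] [CompactSpace C]
    [TopologicalSpace Y] [T2Space Y] {f : C → Y} (hf : Continuous f) :
    IsClosedEmbedding (Setoid.kerLift f) :=
  (hf.quotient_lift _).isClosedEmbedding (Setoid.kerLift_injective f)

section EvalFamily

variable {C : Type*} [TopologicalSpace C]

def evalFamily (D : Set C(C, ℝ)) (c : C) : D → ℝ := fun f => f.1 c

theorem continuous_evalFamily (D : Set C(C, ℝ)) : Continuous (evalFamily D) :=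
  continuous_pi fun f => f.1.continuous

theorem ker_evalFamily_smul {G : Type*} [Group G] [MulAction G C] [ContinuousConstSMul G C]
    {D : Set C(C, ℝ)} (hD : ∀ f ∈ D, ∀ g : G, f.translate g ∈ closure D) (g : G) {x y : C}
    (h : Setoid.ker (evalFamily D) x y) : Setoid.ker (evalFamily D) (g • x) (g • y) := by
  have hcl : closure D ⊆ {f | f x = f y} :=
    closure_minimal (fun f hf => congrFun h ⟨f, hf⟩)
      (isClosed_eq (continuous_eval_const x) (continuous_eval_const y))
  funext f
  simpa [evalFamily] using hcl (hD f f.2 g⁻¹)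

theorem isEmbedding_mk_ker_evalFamily_comp {X : Type*} [TopologicalSpace X] [T0Space X]
    {j : X → C} (hj : Continuous j) {D : Set C(C, ℝ)}
    (hD : ∀ x, ∀ V ∈ 𝓝 x, ∃ f ∈ D, f (j x) < 1 ∧ {y | f (j y) < 1} ⊆ V) :
    IsEmbedding fun x => Quotient.mk (Setoid.ker (evalFamily D)) (j x) := by
  refine (IsInducing.of_comp (g := Setoid.kerLift (evalFamily D))
    (continuous_quotient_mk'.comp hj) ((continuous_evalFamily D).quotient_lift fun _ _ => id)
    ?_).isEmbedding
  refine isInducing_pi_of_sublevel_subset_nhds (φ := fun (f : D) x => f.1 (j x))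
    (fun f => f.1.continuous.comp hj) fun x V hV => ?_
  obtain ⟨f, hfD, hf⟩ := hD x V hV
  exact ⟨⟨f, hfD⟩, hf⟩

end EvalFamily

theorem exists_equivariant_compactification_of_narrow_general
    {G X : Type u} [Group G] [TopologicalSpace G] [IsTopologicalGroup G]
    [TopologicalSpace X] [MulAction G X]
    (κ : Cardinal.{u}) (hκ : Cardinal.aleph0 ≤ κ)
    (hnarrow : ∀ O ∈ 𝓝 (1 : G), ∃ S : Set G, #S ≤ κ ∧ S * O = Set.univ)
    (hTych : IsGTychonoff G X)
    (hbasis : ∃ S : Set (Set X), #S ≤ κ ∧ IsTopologicalBasis S) :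
    ∃ (B : Type u) (_ : TopologicalSpace B) (_ : MulAction G B),
      CompactSpace B ∧ T2Space B ∧ ContinuousSMul G B ∧
      (∃ S : Set (Set B), #S ≤ κ ∧ IsTopologicalBasis S) ∧
      ∃ f : X → B, IsEmbedding f ∧ ∀ (g : G) (x : X), f (g • x) = g • f x := by
  obtain ⟨C, _, _, _, _, _, j, hj, -, hjG⟩ := hTych
  obtain ⟨S, hSκ, hS⟩ := hbasis
  obtain ⟨φ, hφ⟩ := hj.isInducing.exists_sublevel_subset_nhds_family hS
  obtain ⟨D, hDκ, hφD, hDG⟩ := exists_translate_invariant_family hκ hnarrow (ι := S × S)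
    (by simpa [mk_prod] using mul_le_of_le hκ hSκ hSκ) φ
  have hs := ker_evalFamily_smul hDG
  have hB := isClosedEmbedding_kerLift (continuous_evalFamily D)
  have hBT2 : T2Space (Quotient (Setoid.ker (evalFamily D))) := hB.t2Space
  have : T0Space X := hj.t0Space
  refine ⟨_, _, quotientMulAction _ hs, Quotient.compactSpace, hBT2,
    continuousSMul_quotient _ hs, hB.isInducing.exists_isTopologicalBasis_card_le hκ hDκ, _,
    isEmbedding_mk_ker_evalFamily_comp hj.continuous fun x V hV => ?_,
    fun g x => congrArg _ (hjG g x)⟩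
  obtain ⟨p, hp⟩ := hφ x V hV
  exact ⟨φ p, hφD ⟨p, rfl⟩, hp⟩

/-- Let `κ` be an infinite cardinal, `G` a `κ`-narrow topological group and
`X` a `G`-Tychonoff `G`-space with a basis of cardinality at most `κ`.  Then there is a
compact Hausdorff `G`-space `B` with a basis of cardinality at most `κ` and an equivariant
topological embedding `f : X → B`. -/
theorem exists_equivariant_compactification_of_narrow
    {G X : Type u} [Group G] [TopologicalSpace G] [IsTopologicalGroup G]
    [TopologicalSpace X] [MulAction G X] [ContinuousSMul G X]
    (κ : Cardinal.{u}) (hκ : Cardinal.aleph0 ≤ κ)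
    (hnarrow : ∀ O ∈ 𝓝 (1 : G), ∃ S : Set G, #S ≤ κ ∧ S * O = Set.univ)
    (hTych : IsGTychonoff G X)
    (hbasis : ∃ S : Set (Set X), #S ≤ κ ∧ IsTopologicalBasis S) :
    ∃ (B : Type u) (_ : TopologicalSpace B) (_ : MulAction G B),
      CompactSpace B ∧ T2Space B ∧ ContinuousSMul G B ∧
      (∃ S : Set (Set B), #S ≤ κ ∧ IsTopologicalBasis S) ∧
      ∃ f : X → B, IsEmbedding f ∧ ∀ (g : G) (x : X), f (g • x) = g • f x :=
  exists_equivariant_compactification_of_narrow_general κ hκ hnarrow hTych hbasis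
end

section
/- Let (X, U) be a uniform space and let G be a group of homeomorphisms of X (under composition) each of whose elements is uniformly continuous. Then G, endowed with the topology induced by the uniformity of uniform convergence on maps X → X, is a topological group. -/
open Topology

universe u

/-- The group of self-homeomorphisms of a topological space, under composition. -/
instance homeomorphGroup {X : Type u} [TopologicalSpace X] : Group (X ≃ₜ X) where
  mul f g := g.trans f
  one := Homeomorph.refl X
  inv := Homeomorph.symm
  mul_assoc _ _ _ := Homeomorph.ext fun _ => rfl
  one_mul _ := Homeomorph.ext fun _ => rfl
  mul_one _ := Homeomorph.ext fun _ => rfl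
  inv_mul_cancel f := Homeomorph.ext fun x => f.symm_apply_apply x

open Filter Uniformity UniformConvergence

/-! Composition `(f, g) ↦ f ∘ g` of maps, with the uniformity of uniform convergence, is continuous
at every `(f₀, g₀)` with `f₀` uniformly continuous: `f ∘ g` is uniformly close to `f₀ ∘ g` whatever
`g` is, and `f₀ ∘ g` is close to `f₀ ∘ g₀` by uniform continuity of `f₀`. Inversion is continuous
at `e₀` because `e⁻¹ = e₀⁻¹ ∘ (e₀ ∘ e⁻¹)`, where `e₀ ∘ e⁻¹` is close to `e ∘ e⁻¹ = id`. -/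

namespace UniformFun

variable {ι α β γ : Type*} [UniformSpace β] {l : Filter ι}

theorem tendsto_uniformity_comp_right {f f' : ι → α → β} {g : ι → γ → α}
    (h : Tendsto (fun i => (ofFun (f i), ofFun (f' i))) l (𝓤 (α →ᵤ β))) :
    Tendsto (fun i => (ofFun (f i ∘ g i), ofFun (f' i ∘ g i))) l (𝓤 (γ →ᵤ β)) := by
  rw [(UniformFun.hasBasis_uniformity α β).tendsto_right_iff] at h
  rw [(UniformFun.hasBasis_uniformity γ β).tendsto_right_iff]
  exact fun V hV => (h V hV).mono fun i hi x => hi (g i x)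

theorem tendsto_comp [UniformSpace α] {f : ι → α → β} {g : ι → γ → α} {f₀ : α → β}
    {g₀ : γ → α} (hf₀ : UniformContinuous f₀)
    (hf : Tendsto (fun i => ofFun (f i)) l (𝓝 (ofFun f₀)))
    (hg : Tendsto (fun i => ofFun (g i)) l (𝓝 (ofFun g₀))) :
    Tendsto (fun i => ofFun (f i ∘ g i)) l (𝓝 (ofFun (f₀ ∘ g₀))) := by
  have hpost : Tendsto (fun i => ofFun (f₀ ∘ g i)) l (𝓝 (ofFun (f₀ ∘ g₀))) :=
    ((UniformFun.postcomp_uniformContinuous hf₀).continuous.tendsto (ofFun g₀)).comp hg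
  exact hpost.congr_uniformity
    (tendsto_uniformity_comp_right (f := fun _ => f₀) (Uniform.tendsto_nhds_right.1 hf))

theorem tendsto_symm [UniformSpace α] {e : ι → α ≃ β} {e₀ : α ≃ β}
    (he₀ : UniformContinuous e₀.symm) (he : Tendsto (fun i => ofFun ⇑(e i)) l (𝓝 (ofFun ⇑e₀))) :
    Tendsto (fun i => ofFun ⇑(e i).symm) l (𝓝 (ofFun ⇑e₀.symm)) := by
  have hcancel : Tendsto (fun i => ofFun (e₀ ∘ (e i).symm)) l (𝓝 (ofFun id)) := by
    rw [Uniform.tendsto_nhds_left]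
    simpa only [Equiv.self_comp_symm] using
      tendsto_uniformity_comp_right (g := fun i => (e i).symm) (Uniform.tendsto_nhds_right.1 he)
  simpa [Function.comp_def] using tendsto_comp he₀ tendsto_const_nhds hcancel

end UniformFun

/-- Let `(X, U)` be a uniform space and `G` a group of homeomorphisms of
`X` each of whose elements is uniformly continuous.  Then `G`, endowed with the topology
induced by the uniformity of uniform convergence, is a topological group. -/
theorem topologicalGroup_of_uniformlyContinuous_homeomorphisms
    {X : Type u} [UniformSpace X] (G : Subgroup (X ≃ₜ X))
    (hG : ∀ g ∈ G, UniformContinuous ⇑g) :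
    @IsTopologicalGroup G
      (TopologicalSpace.induced (fun g : G => UniformFun.ofFun ⇑(g : X ≃ₜ X)) inferInstance)
      _ := by
  let _ : TopologicalSpace G := .induced (fun g : G => UniformFun.ofFun ⇑(g : X ≃ₜ X)) inferInstance
  have hcoe {g : G} : Tendsto (fun h : G => UniformFun.ofFun ⇑(h : X ≃ₜ X)) (𝓝 g)
      (𝓝 (UniformFun.ofFun ⇑(g : X ≃ₜ X))) :=
    continuous_induced_dom.tendsto g
  refine
    { continuous_mul := continuous_induced_rng.2 <| continuous_iff_continuousAt.2 fun p => ?_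
      continuous_inv := continuous_induced_rng.2 <| continuous_iff_continuousAt.2 fun g => ?_ }
  · exact (UniformFun.tendsto_comp (hG _ p.1.2) (hcoe.comp continuous_fst.continuousAt)
      (hcoe.comp continuous_snd.continuousAt) :)
  · exact UniformFun.tendsto_symm (e := fun h : G => (h : X ≃ₜ X).toEquiv) (hG _ (inv_mem g.2))
      hcoe
end

section
/- Let a topological group G act continuously on a space X and let H be a dense subgroup of G. Then for every point x ∈ X, the action of G is d-open at x if and only if the restricted action of H is d-open at x; in particular the set of points where the G-action is d-open coincides with the set of points where the H-action is d-open. -/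
open Topology Set Filter

/-!
Restricting the orbit map `g ↦ g • x` to `H` loses nothing up to closure: for a neighbourhood
`U` of `1` in `G`, the set `U ∩ H` is dense in `interior U`, so by continuity the `H`-orbit
piece `(U ∩ H) • x` is dense in `(interior U) • x`. Conversely every `G`-neighbourhood of `1`
traces a neighbourhood of `1` in `H`.
-/

namespace Topology.IsInducing

variable {Y Z W : Type*} [TopologicalSpace Y] [TopologicalSpace Z] [TopologicalSpace W]
  {ι : Y → Z} {f : Z → W}

theorem forall_nhds_mem_interior_closure_image_comp_iff (hι : IsInducing ι) (hd : DenseRange ι)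
    (hf : Continuous f) (y : Y) (w : W) :
    (∀ O ∈ 𝓝 (ι y), w ∈ interior (closure (f '' O))) ↔
      ∀ O ∈ 𝓝 y, w ∈ interior (closure ((f ∘ ι) '' O)) := by
  refine ⟨fun h O hO => ?_, fun h O hO => ?_⟩
  · obtain ⟨u, hu, huO⟩ : O ∈ comap ι (𝓝 (ι y)) := hι.nhds_eq_comap y ▸ hO
    have hsub : f '' interior u ⊆ closure ((f ∘ ι) '' O) := calc
      f '' interior u ⊆ f '' closure (ι '' (ι ⁻¹' interior u)) :=
        image_mono (hd.subset_closure_image_preimage_of_isOpen isOpen_interior)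
      _ ⊆ closure (f '' (ι '' (ι ⁻¹' interior u))) := image_closure_subset_closure_image hf
      _ ⊆ closure ((f ∘ ι) '' O) := by
        rw [← image_comp]
        exact closure_mono (image_mono ((preimage_mono interior_subset).trans huO))
    exact interior_mono (closure_minimal hsub isClosed_closure) (h _ (interior_mem_nhds.2 hu))
  · refine interior_mono (closure_mono ?_) (h _ (hι.continuous.continuousAt.preimage_mem_nhds hO))
    rw [image_comp]
    exact image_mono (image_preimage_subset ι O)

end Topology.IsInducing

theorem dOpen_iff_dOpen_of_dense_subgroup_general
    {G X : Type u} [Group G] [TopologicalSpace G]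
    [TopologicalSpace X] [MulAction G X] [ContinuousSMul G X]
    (H : Subgroup G) (hH : Dense (H : Set G)) :
    (∀ x : X,
      (∀ O ∈ 𝓝 (1 : G), x ∈ interior (closure ((fun g : G => g • x) '' O))) ↔
      (∀ O ∈ 𝓝 (1 : H), x ∈ interior (closure ((fun h : H => (h : G) • x) '' O)))) ∧
    {x : X | ∀ O ∈ 𝓝 (1 : G), x ∈ interior (closure ((fun g : G => g • x) '' O))} =
    {x : X | ∀ O ∈ 𝓝 (1 : H), x ∈ interior (closure ((fun h : H => (h : G) • x) '' O))} := by
  have hpoint (x : X) := IsInducing.subtypeVal.forall_nhds_mem_interior_closure_image_comp_iff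
    hH.denseRange_val (continuous_id.smul (continuous_const (y := x))) (1 : H) x
  exact ⟨hpoint, Set.ext hpoint⟩

/-- Let a topological group `G` act continuously on `X` and let `H` be a
dense subgroup of `G`.  Then for every `x ∈ X` the `G`-action is d-open at `x` iff the
restricted `H`-action is d-open at `x`; in particular the sets of points of d-openness
coincide. -/
theorem dOpen_iff_dOpen_of_dense_subgroup
    {G X : Type u} [Group G] [TopologicalSpace G] [IsTopologicalGroup G]
    [TopologicalSpace X] [MulAction G X] [ContinuousSMul G X]
    (H : Subgroup G) (hH : Dense (H : Set G)) :
    (∀ x : X,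
      (∀ O ∈ 𝓝 (1 : G), x ∈ interior (closure ((fun g : G => g • x) '' O))) ↔
      (∀ O ∈ 𝓝 (1 : H), x ∈ interior (closure ((fun h : H => (h : G) • x) '' O)))) ∧
    {x : X | ∀ O ∈ 𝓝 (1 : G), x ∈ interior (closure ((fun g : G => g • x) '' O))} =
    {x : X | ∀ O ∈ 𝓝 (1 : H), x ∈ interior (closure ((fun h : H => (h : G) • x) '' O))} :=
  dOpen_iff_dOpen_of_dense_subgroup_general H hH
end

section
/- Let a topological group G act continuously and d-openly on a space X, and let Y be a dense subset of X. Then for every neighborhood O of the identity of G, the family {interior(closure(O•y)) : y ∈ Y} is a cover of X. -/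
open Topology

universe u

/-!
Shrink `O` to a neighbourhood `W` of `1` with `W * W⁻¹ * W ⊆ O`. By d-openness `x` lies in
the open set `interior (closure (W • x))`, which contains some `y ∈ Y` by density. As `y` also
lies in the open set `interior (closure (W • y))`, some `g • x` with `g ∈ W` lies in
`closure (W • y)`; translating back by `W * g⁻¹` gives `W • x ⊆ closure (O • y)`, hence
`x ∈ interior (closure (O • y))`.
-/

open Set Pointwise Filter

theorem exists_nhds_one_mul_inv_mul_subset {G : Type*} [Group G] [TopologicalSpace G]
    [IsTopologicalGroup G] {O : Set G} (hO : O ∈ 𝓝 (1 : G)) :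
    ∃ W ∈ 𝓝 (1 : G), W * W⁻¹ * W ⊆ O := by
  obtain ⟨V, hV, hVO⟩ := exists_nhds_one_split4 hO
  refine ⟨V ∩ V⁻¹, inter_mem hV (inv_mem_nhds_one G hV), ?_⟩
  rintro _ ⟨_, ⟨h, hh, g, hg, rfl⟩, k, hk, rfl⟩
  simpa using hVO hh.1 (by simpa using hg.2) hk.1 (mem_of_mem_nhds hV)

section OrbitClosures

variable {G X : Type*} [Group G] [TopologicalSpace X] [MulAction G X] [ContinuousConstSMul G X]
  {W O : Set G} {x y : X}

theorem closure_smul_singleton_subset_of_smul_mem_closure (hWO : W * W⁻¹ * W ⊆ O) {g : G}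
    (hg : g ∈ W) (hgx : g • x ∈ closure (W • {y})) :
    closure (W • {x}) ⊆ closure (O • {y}) := by
  refine closure_minimal ?_ isClosed_closure
  calc (W • {x} : Set X)
      _ ⊆ (W * W⁻¹) • {g • x} := by
        rintro _ ⟨h, hh, _, hx, rfl⟩
        rw [mem_singleton_iff.1 hx]
        exact ⟨h * g⁻¹, mul_mem_mul hh (inv_mem_inv.2 hg), g • x, rfl, by simp [smul_smul]⟩
      _ ⊆ (W * W⁻¹) • closure (W • {y}) :=
        smul_subset_smul_left (singleton_subset_iff.2 hgx)
      _ ⊆ closure ((W * W⁻¹) • W • {y}) := set_smul_closure_subset _ _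
      _ ⊆ closure (O • {y}) := by
        rw [← mul_smul]
        exact closure_mono (smul_subset_smul_right hWO)

theorem mem_interior_closure_smul_singleton_of_mem_closure (hWO : W * W⁻¹ * W ⊆ O)
    (hx : x ∈ interior (closure (W • {x}))) (hyx : y ∈ closure (W • {x}))
    (hy : y ∈ interior (closure (W • {y}))) :
    x ∈ interior (closure (O • {y})) := by
  obtain ⟨_, hgy, g, hg, _, rfl, rfl⟩ := mem_closure_iff.1 hyx _ isOpen_interior hy
  exact interior_mono
    (closure_smul_singleton_subset_of_smul_mem_closure hWO hg (interior_subset hgy)) hx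

end OrbitClosures

/-- Let a topological group `G` act continuously and d-openly on `X` and
let `Y` be a dense subset of `X`.  Then for every neighborhood `O` of the identity, the
family `{interior (closure (O • y)) : y ∈ Y}` covers `X`. -/
theorem cover_of_dOpen_action_of_dense
    {G X : Type u} [Group G] [TopologicalSpace G] [IsTopologicalGroup G]
    [TopologicalSpace X] [MulAction G X] [ContinuousSMul G X]
    (hdopen : ∀ x : X, ∀ O ∈ 𝓝 (1 : G),
      x ∈ interior (closure ((fun g : G => g • x) '' O)))
    (Y : Set X) (hY : Dense Y) :
    ∀ O ∈ 𝓝 (1 : G),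
      (⋃ y ∈ Y, interior (closure ((fun g : G => g • y) '' O))) = Set.univ := by
  intro O hO
  simp only [← smul_singleton] at hdopen ⊢
  obtain ⟨W, hW, hWO⟩ := exists_nhds_one_mul_inv_mul_subset hO
  refine eq_univ_of_forall fun x => mem_iUnion₂.2 ?_
  have hx := hdopen x W hW
  obtain ⟨y, hyY, hyx⟩ := hY.exists_mem_open isOpen_interior ⟨x, hx⟩
  exact ⟨y, hyY, mem_interior_closure_smul_singleton_of_mem_closure hWO hx
    (interior_subset hyx) (hdopen y W hW)⟩
end

section
/- Let τ be an infinite cardinal, let G be a topological group with #G ≤ τ, and let O be a family of neighborhoods of the identity of G with #O ≤ τ. Then there exists a family B of neighborhoods of the identity with #B ≤ τ such that: every member of O contains some member of B; the intersection of any two members of B contains a member of B (so B is a filter basis); every B ∈ B is symmetric (B = B⁻¹); for every B ∈ B there is V ∈ B with V·V ⊆ B; and for every B ∈ B and every g ∈ G there is V ∈ B with g·V·g⁻¹ ⊆ B. -/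
open Topology Pointwise Cardinal

universe u

/-!
Fix a choice `f g b` of a symmetric neighbourhood of `1` with `f g b * f g b ⊆ b` and
`g (f g b) g⁻¹ ⊆ b` for every `g` and every neighbourhood `b` of `1`. Close `f 1 '' O` under
all the maps `f g` and under binary intersection. Doing this in `ω` rounds, each of which
multiplies the size by at most `#G ≤ τ`, the closure has at most `τ` members, and it has all
the required properties because the maps `f g` and intersections preserve symmetric
neighbourhoods of `1`.
-/

namespace Set

variable {α ι : Type u} (f : ι → α → α) (op : α → α → α)

def closureStep (T : Set α) : Set α :=
  T ∪ (⋃ i, f i '' T) ∪ image2 op T T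

def closureUnder (S : Set α) : Set α :=
  ⋃ n : ℕ, (closureStep f op)^[n] S

variable {f op} {S : Set α}

theorem monotone_iterate_closureStep (S : Set α) :
    Monotone fun n => (closureStep f op)^[n] S :=
  monotone_nat_of_le_succ fun n => by
    rw [Function.iterate_succ_apply']
    exact fun _ h => Or.inl (Or.inl h)

theorem subset_closureUnder : S ⊆ closureUnder f op S :=
  subset_iUnion (fun n => (closureStep f op)^[n] S) 0

theorem apply_mem_closureUnder (i : ι) {a : α} (ha : a ∈ closureUnder f op S) :
    f i a ∈ closureUnder f op S := by
  obtain ⟨n, hn⟩ := mem_iUnion.1 ha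
  refine mem_iUnion.2 ⟨n + 1, ?_⟩
  rw [Function.iterate_succ_apply']
  exact Or.inl (Or.inr (mem_iUnion.2 ⟨i, mem_image_of_mem _ hn⟩))

theorem op_mem_closureUnder {a b : α} (ha : a ∈ closureUnder f op S)
    (hb : b ∈ closureUnder f op S) : op a b ∈ closureUnder f op S := by
  obtain ⟨m, hm⟩ := mem_iUnion.1 ha
  obtain ⟨n, hn⟩ := mem_iUnion.1 hb
  have hmono := monotone_iterate_closureStep (f := f) (op := op) S
  refine mem_iUnion.2 ⟨max m n + 1, ?_⟩
  rw [Function.iterate_succ_apply']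
  exact Or.inr (mem_image2_of_mem (hmono (le_max_left m n) hm) (hmono (le_max_right m n) hn))

theorem closureUnder_subset {C : Set α} (hS : S ⊆ C) (hf : ∀ i, MapsTo (f i) C C)
    (hop : ∀ a ∈ C, ∀ b ∈ C, op a b ∈ C) : closureUnder f op S ⊆ C := by
  refine iUnion_subset fun n => ?_
  induction n with
  | zero => exact hS
  | succ n ih =>
    rw [Function.iterate_succ_apply']
    rintro x ((hx | hx) | ⟨a, ha, b, hb, rfl⟩)
    · exact ih hx
    · obtain ⟨i, a, ha, rfl⟩ := mem_iUnion.1 hx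
      exact hf i (ih ha)
    · exact hop a (ih ha) b (ih hb)

theorem mk_closureStep_le {τ : Cardinal.{u}} (hτ : ℵ₀ ≤ τ) (hι : #ι ≤ τ) {T : Set α}
    (hT : #T ≤ τ) : #(closureStep f op T) ≤ τ := by
  have himages : #(⋃ i, f i '' T) ≤ τ :=
    (mk_iUnion_le _).trans <| mul_le_of_le hτ hι <| ciSup_le' fun _ => mk_image_le.trans hT
  have hpairs : #(image2 op T T) ≤ τ := mk_image2_le.trans (mul_le_of_le hτ hT hT)
  refine (mk_union_le _ _).trans (add_le_of_le hτ ?_ hpairs)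
  exact (mk_union_le _ _).trans (add_le_of_le hτ hT himages)

theorem mk_closureUnder_le {τ : Cardinal.{u}} (hτ : ℵ₀ ≤ τ) (hι : #ι ≤ τ) (hS : #S ≤ τ) :
    #(closureUnder f op S) ≤ τ := by
  have hstage : ∀ n, #((closureStep f op)^[n] S) ≤ τ := by
    intro n
    induction n with
    | zero => exact hS
    | succ n ih =>
      rw [Function.iterate_succ_apply']
      exact mk_closureStep_le hτ hι ih
  have := mk_iUnion_le_lift (fun n : ℕ => (closureStep f op)^[n] S)
  simp only [lift_uzero, mk_eq_aleph0, lift_aleph0] at this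
  exact this.trans (mul_le_of_le hτ hτ (ciSup_le' hstage))

end Set

theorem exists_nhds_one_inv_eq_mul_subset_conj_subset {G : Type*} [Group G]
    [TopologicalSpace G] [IsTopologicalGroup G] {b : Set G} (hb : b ∈ 𝓝 (1 : G)) (g : G) :
    ∃ v ∈ 𝓝 (1 : G), v⁻¹ = v ∧ v * v ⊆ b ∧ (fun h : G => g * h * g⁻¹) '' v ⊆ b := by
  have hconj : (fun h : G => g * h * g⁻¹) ⁻¹' b ∈ 𝓝 (1 : G) :=
    (by fun_prop : Continuous fun h : G => g * h * g⁻¹).continuousAt.preimage_mem_nhds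
      (by simpa using hb)
  obtain ⟨v, hv, -, hv_inv, hv_mul⟩ :=
    exists_closed_nhds_one_inv_eq_mul_subset (Filter.inter_mem hb hconj)
  have hv_sub : v ⊆ b ∩ _ := (Set.subset_mul_left v (mem_of_mem_nhds hv)).trans hv_mul
  exact ⟨v, hv, hv_inv, hv_mul.trans Set.inter_subset_left,
    Set.image_subset_iff.2 (hv_sub.trans Set.inter_subset_right)⟩

/-- Let `τ` be an infinite cardinal, `G` a topological group with
`#G ≤ τ` and `O` a family of at most `τ` neighborhoods of the identity.  Then there is a
family `B` of at most `τ` neighborhoods of the identity such that: every member of `O`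
contains a member of `B`; `B` is a filter basis; every member of `B` is symmetric; every
member of `B` contains the square of some member of `B`; and `B` is stable (in the
refinement sense) under conjugation by elements of `G`. -/
theorem exists_invariant_filter_basis
    {G : Type u} [Group G] [TopologicalSpace G] [IsTopologicalGroup G]
    (τ : Cardinal.{u}) (hτ : Cardinal.aleph0 ≤ τ) (hG : #G ≤ τ)
    (O : Set (Set G)) (hO : ∀ o ∈ O, o ∈ 𝓝 (1 : G)) (hOcard : #O ≤ τ) :
    ∃ B : Set (Set G), #B ≤ τ ∧
      (∀ b ∈ B, b ∈ 𝓝 (1 : G)) ∧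
      (∀ o ∈ O, ∃ b ∈ B, b ⊆ o) ∧
      (∀ b₁ ∈ B, ∀ b₂ ∈ B, ∃ b ∈ B, b ⊆ b₁ ∩ b₂) ∧
      (∀ b ∈ B, b = b⁻¹) ∧
      (∀ b ∈ B, ∃ v ∈ B, v * v ⊆ b) ∧
      (∀ b ∈ B, ∀ g : G, ∃ v ∈ B, (fun h : G => g * h * g⁻¹) '' v ⊆ b) := by
  choose! f hf_nhds hf_inv hf_mul hf_conj using
    fun (g : G) (b : Set G) (hb : b ∈ 𝓝 (1 : G)) =>
      exists_nhds_one_inv_eq_mul_subset_conj_subset hb g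
  set B := Set.closureUnder f (· ∩ ·) (f 1 '' O)
  have hB : B ⊆ {b | b ∈ 𝓝 (1 : G) ∧ b = b⁻¹} := by
    refine Set.closureUnder_subset ?_ ?_ ?_
    · rintro _ ⟨o, ho, rfl⟩
      exact ⟨hf_nhds 1 o (hO o ho), (hf_inv 1 o (hO o ho)).symm⟩
    · exact fun g b hb => ⟨hf_nhds g b hb.1, (hf_inv g b hb.1).symm⟩
    · rintro a ⟨ha, ha_inv⟩ b ⟨hb, hb_inv⟩
      exact ⟨Filter.inter_mem ha hb, by rw [Set.inter_inv, ← ha_inv, ← hb_inv]⟩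
  refine ⟨B, Set.mk_closureUnder_le hτ hG (mk_image_le.trans hOcard), fun b hb => (hB hb).1,
    fun o ho => ⟨f 1 o, Set.subset_closureUnder ⟨o, ho, rfl⟩, ?_⟩,
    fun b₁ hb₁ b₂ hb₂ => ⟨b₁ ∩ b₂, Set.op_mem_closureUnder hb₁ hb₂, subset_rfl⟩,
    fun b hb => (hB hb).2,
    fun b hb => ⟨f 1 b, Set.apply_mem_closureUnder 1 hb, hf_mul 1 b (hB hb).1⟩,
    fun b hb g => ⟨f g b, Set.apply_mem_closureUnder g hb, hf_conj g b (hB hb).1⟩⟩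
  simpa using hf_conj 1 o (hO o ho)
end

section
/- Let a topological group G act continuously and d-openly on a topological space X, and let κ be an infinite cardinal such that the topology of X has a basis of cardinality at most κ. Then there exist a topological group H with #H ≤ κ whose topology has a basis of cardinality at most κ, and a continuous d-open action of H on X. -/
open Topology TopologicalSpace Cardinal Set Filter Pointwise

universe u

/-!
A Löwenheim–Skolem argument. Fix a basis `S` of `X` with `#S ≤ κ`. Close a family `𝒰` of
neighbourhoods of `1` in `G` under intersections, inverses, choices of `V` with `V * V ⊆ U`, and
conjugation by a set `E ⊆ G`, where `E` contains, for all `U ∈ 𝒰` and `W, B ∈ S`, some `g ∈ U`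
with `g • B ⊆ W` whenever such a `g` exists; start `𝒰` with the neighbourhoods of the form
`{g | g • W ⊆ V}`. After `ω` steps everything has size `≤ κ`. On `H = ⟨E⟩` the traces of `𝒰` form a
group filter basis whose topology has weight `≤ κ`. The sets `{g | g • W ⊆ V}` make the action
of `H` continuous at `1`, hence continuous, and the choice of `E` makes `(U ∩ H) • x` dense in
`U • x`, so d-openness passes from `G` to `H`.
-/

def IsDOpenAction (G X : Type*) [Monoid G] [TopologicalSpace G] [TopologicalSpace X]
    [MulAction G X] : Prop :=
  ∀ x : X, ∀ O ∈ 𝓝 (1 : G), x ∈ interior (closure ((fun g : G => g • x) '' O))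

theorem exists_isTopologicalBasis_card_le_of_hasBasis {α ι : Type u} [TopologicalSpace α]
    {κ : Cardinal.{u}} (hκ : ℵ₀ ≤ κ) (hα : #α ≤ κ) {I : Set ι} (hI : #I ≤ κ)
    {s : α → ι → Set α} (hs : ∀ a, (𝓝 a).HasBasis (· ∈ I) (s a)) :
    ∃ S : Set (Set α), #S ≤ κ ∧ IsTopologicalBasis S := by
  refine ⟨range fun p : α × I => interior (s p.1 p.2), mk_range_le.trans ?_,
    isTopologicalBasis_of_isOpen_of_nhds ?_ ?_⟩
  · simpa using mul_le_of_le hκ hα hI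
  · rintro _ ⟨p, rfl⟩
    exact isOpen_interior
  · intro a O haO hO
    obtain ⟨i, hi, hiO⟩ := (hs a).mem_iff.1 (hO.mem_nhds haO)
    exact ⟨_, ⟨(a, ⟨i, hi⟩), rfl⟩, mem_interior_iff_mem_nhds.2 ((hs a).mem_of_mem hi),
      interior_subset.trans hiO⟩

theorem continuousAt_smul_one_iff {M X : Type*} [Monoid M] [TopologicalSpace M]
    [TopologicalSpace X] [MulAction M X] {S : Set (Set X)} (hS : IsTopologicalBasis S) (x : X) :
    ContinuousAt (fun p : M × X => p.1 • p.2) (1, x) ↔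
      ∀ V ∈ S, x ∈ V → ∃ W ∈ S, x ∈ W ∧ {g : M | g • W ⊆ V} ∈ 𝓝 1 := by
  rw [ContinuousAt, one_smul, nhds_prod_eq,
    ((𝓝 (1 : M)).basis_sets.prod hS.nhds_hasBasis).tendsto_iff hS.nhds_hasBasis]
  simp only [id, and_imp, Prod.forall, mem_prod, smul_set_subset_iff, Prod.exists]
  refine forall₂_congr fun V _ => forall_congr' fun _ => ⟨?_, ?_⟩
  · rintro ⟨A, W, ⟨hA, hW, hxW⟩, hAW⟩
    exact ⟨W, hW, hxW, mem_of_superset hA fun g hg y hy => hAW g y hg hy⟩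
  · rintro ⟨W, hW, hxW, hO⟩
    exact ⟨_, W, ⟨hO, hW, hxW⟩, fun g y hg hy => hg hy⟩

theorem continuousSMul_of_continuousAt_one {M X : Type*} [Group M] [TopologicalSpace M]
    [ContinuousMul M] [TopologicalSpace X] [MulAction M X] [ContinuousConstSMul M X]
    (h : ∀ x : X, ContinuousAt (fun p : M × X => p.1 • p.2) (1, x)) : ContinuousSMul M X := by
  refine ⟨continuous_iff_continuousAt.2 fun ⟨g, x⟩ => ?_⟩
  have hshift : ContinuousAt (fun p : M × X => (g⁻¹ * p.1, p.2)) (g, x) := by fun_prop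
  have := (continuous_const_smul g).continuousAt.comp
    ((h x).comp_of_eq hshift (by simp))
  simpa [Function.comp_def, smul_smul] using this

theorem IsDOpenAction.subgroup {G X : Type*} [Group G] [TopologicalSpace G] [TopologicalSpace X]
    [MulAction G X] (hG : IsDOpenAction G X) {H : Subgroup G} [TopologicalSpace H]
    {F : Set (Set G)} (hF : F ⊆ (𝓝 (1 : G)).sets)
    (hH : ∀ O ∈ 𝓝 (1 : H), ∃ U ∈ F, Subtype.val ⁻¹' U ⊆ O)
    (hdense : ∀ U ∈ F, ∀ x : X,
      (fun g : G => g • x) '' U ⊆ closure ((fun h : H => h • x) '' (Subtype.val ⁻¹' U))) :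
    IsDOpenAction H X := by
  intro x O hO
  obtain ⟨U, hUF, hUO⟩ := hH O hO
  refine interior_mono (closure_minimal ?_ isClosed_closure) (hG x U (hF hUF))
  exact (hdense U hUF x).trans (closure_mono (image_mono hUO))

theorem image_smul_subset_closure_of_forall_exists {G X : Type*} [Group G] [TopologicalSpace X]
    [MulAction G X] [ContinuousConstSMul G X] {S : Set (Set X)} (hS : IsTopologicalBasis S)
    {H : Subgroup G} {U : Set G}
    (hU : ∀ W ∈ S, ∀ B ∈ S, (∃ g ∈ U, g • B ⊆ W) → ∃ h : H, (h : G) ∈ U ∧ h • B ⊆ W)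
    (x : X) :
    (fun g : G => g • x) '' U ⊆ closure ((fun h : H => h • x) '' (Subtype.val ⁻¹' U)) := by
  rintro _ ⟨g, hg, rfl⟩
  rw [hS.mem_closure_iff]
  intro W hW hgxW
  obtain ⟨B, hB, hxB, hBW⟩ := hS.exists_subset_of_mem_open (a := x) (u := (g • ·) ⁻¹' W) hgxW
    ((hS.isOpen hW).preimage (continuous_const_smul g))
  obtain ⟨h, hhU, hhW⟩ := hU W hW B hB ⟨g, hg, smul_set_subset_iff.2 fun y hy => hBW hy⟩
  exact ⟨h • x, hhW (smul_mem_smul_set hxB), h, hhU, rfl⟩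

theorem Subgroup.cardinalMk_closure_le {G : Type u} [Group G] {s : Set G} {κ : Cardinal.{u}}
    (hκ : ℵ₀ ≤ κ) (hs : #s ≤ κ) : #(Subgroup.closure s) ≤ κ := by
  rw [FreeGroup.closure_eq_range]
  calc #(FreeGroup.lift ((↑) : s → G)).range
      ≤ #(FreeGroup s) := mk_range_le
    _ ≤ #(List (s × Bool)) := mk_le_of_surjective fun w => Quot.exists_rep w
    _ ≤ κ := by
      refine (mk_list_le_max _).trans (max_le hκ ?_)
      simpa using mul_le_of_le hκ hs (ofNat_lt_aleph0.le.trans hκ)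

theorem Cardinal.mk_iUnion_nat_le {α : Type u} {κ : Cardinal.{u}} (hκ : ℵ₀ ≤ κ) {s : ℕ → Set α}
    (hs : ∀ n, #(s n) ≤ κ) : #(⋃ n, s n) ≤ κ := by
  rw [← Cardinal.lift_le.{0}]
  refine (mk_iUnion_le_lift s).trans ?_
  simpa using mul_le_of_le hκ hκ (ciSup_le' hs)

theorem Monotone.exists_mem_of_mem_iUnion_of_mem_iUnion {α : Type*} {s : ℕ → Set α}
    (hs : Monotone s) {a b : α} (ha : a ∈ ⋃ n, s n) (hb : b ∈ ⋃ n, s n) :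
    ∃ n, a ∈ s n ∧ b ∈ s n := by
  obtain ⟨m, ha⟩ := mem_iUnion.1 ha
  obtain ⟨n, hb⟩ := mem_iUnion.1 hb
  exact ⟨max m n, hs (le_max_left m n) ha, hs (le_max_right m n) hb⟩

noncomputable section

namespace SmallActingSubgroup

variable {G X : Type u} [Group G] [MulAction G X]

def orbitWitness (U : Set G) (W B : Set X) : G :=
  Classical.epsilon fun g => g ∈ U ∧ g • B ⊆ W

theorem orbitWitness_spec {U : Set G} {W B : Set X} (h : ∃ g ∈ U, g • B ⊆ W) :
    orbitWitness U W B ∈ U ∧ orbitWitness U W B • B ⊆ W :=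
  Classical.epsilon_spec (p := fun g => g ∈ U ∧ g • B ⊆ W) (let ⟨g, hg⟩ := h; ⟨g, hg⟩)

def orbitWitnesses (S : Set (Set X)) (F : Set (Set G)) : Set G :=
  image2 (fun U (p : Set X × Set X) => orbitWitness U p.1 p.2) F (S ×ˢ S)

theorem mk_orbitWitnesses_le {S : Set (Set X)} {F : Set (Set G)} {κ : Cardinal.{u}}
    (hκ : ℵ₀ ≤ κ) (hS : #S ≤ κ) (hF : #F ≤ κ) : #(orbitWitnesses S F) ≤ κ :=
  mk_image2_le.trans (mul_le_of_le hκ hF (by simpa using mul_le_of_le hκ hS hS))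

variable [TopologicalSpace G]

def halfNhds (U : Set G) : Set G :=
  Classical.epsilon fun V => V ∈ 𝓝 (1 : G) ∧ V * V ⊆ U

theorem halfNhds_spec [ContinuousMul G] {U : Set G} (hU : U ∈ 𝓝 (1 : G)) :
    halfNhds U ∈ 𝓝 (1 : G) ∧ halfNhds U * halfNhds U ⊆ U := by
  obtain ⟨V, hV, hV1, hVU⟩ := exists_open_nhds_one_mul_subset hU
  exact Classical.epsilon_spec (p := fun V => V ∈ 𝓝 (1 : G) ∧ V * V ⊆ U)
    ⟨V, hV.mem_nhds hV1, hVU⟩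

variable (S : Set (Set X))

def basicActionNhds : Set (Set G) :=
  {O ∈ image2 (fun W V => {g : G | g • W ⊆ V}) S S | O ∈ 𝓝 (1 : G)}

-- Conjugating by the generators and their inverses suffices: `Subgroup.closure_induction''`
-- then gives stability under conjugation by all of `subgroup S`.
def closureStep (F : Set (Set G)) : Set (Set G) :=
  F ∪ image2 (· ∩ ·) F F ∪ (·⁻¹) '' F ∪ halfNhds '' F ∪
    image2 (fun g U => (fun x => g * x * g⁻¹) ⁻¹' U)
      (orbitWitnesses S F ∪ (orbitWitnesses S F)⁻¹) F

-- `Set.univ` keeps the family nonempty when `X` is empty.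
def nhdsStage (n : ℕ) : Set (Set G) :=
  (closureStep S)^[n] (insert Set.univ (basicActionNhds S))

def nhdsFamily : Set (Set G) := ⋃ n, nhdsStage S n

def subgroup : Subgroup G := Subgroup.closure (orbitWitnesses S (nhdsFamily (G := G) S))

theorem nhdsStage_mono : Monotone (nhdsStage (G := G) S) := fun _ _ hmn =>
  Function.monotone_iterate_of_id_le (fun _ => subset_union_left.trans
    (subset_union_left.trans (subset_union_left.trans subset_union_left))) hmn _

theorem mem_nhdsFamily_of_mem_closureStep {n : ℕ} {U : Set G}
    (hU : U ∈ closureStep S (nhdsStage S n)) : U ∈ nhdsFamily S :=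
  mem_iUnion.2 ⟨n + 1, by rwa [nhdsStage, Function.iterate_succ_apply']⟩

theorem basicActionNhds_subset_nhdsFamily : basicActionNhds S ⊆ nhdsFamily (G := G) S :=
  fun _ hO => mem_iUnion.2 ⟨0, (mem_insert_of_mem _ hO :)⟩

theorem univ_mem_nhdsFamily : Set.univ ∈ nhdsFamily (G := G) S :=
  mem_iUnion.2 ⟨0, (mem_insert _ _ :)⟩

theorem inter_mem_nhdsFamily {U V : Set G} (hU : U ∈ nhdsFamily S) (hV : V ∈ nhdsFamily S) :
    U ∩ V ∈ nhdsFamily S := by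
  obtain ⟨n, hU, hV⟩ := (nhdsStage_mono S).exists_mem_of_mem_iUnion_of_mem_iUnion hU hV
  exact mem_nhdsFamily_of_mem_closureStep S (n := n) <|
    .inl <| .inl <| .inl <| .inr <| mem_image2_of_mem hU hV

theorem inv_mem_nhdsFamily {U : Set G} (hU : U ∈ nhdsFamily S) : U⁻¹ ∈ nhdsFamily S := by
  obtain ⟨n, hU⟩ := mem_iUnion.1 hU
  exact mem_nhdsFamily_of_mem_closureStep S (n := n) <|
    .inl <| .inl <| .inr <| mem_image_of_mem _ hU

theorem halfNhds_mem_nhdsFamily {U : Set G} (hU : U ∈ nhdsFamily S) :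
    halfNhds U ∈ nhdsFamily S := by
  obtain ⟨n, hU⟩ := mem_iUnion.1 hU
  exact mem_nhdsFamily_of_mem_closureStep S (n := n) <| .inl <| .inr <| mem_image_of_mem _ hU

theorem conj_mem_nhdsFamily_of_mem_orbitWitnesses {g : G}
    (hg : g ∈ orbitWitnesses S (nhdsFamily S)) {U : Set G} (hU : U ∈ nhdsFamily S) :
    (fun x => g * x * g⁻¹) ⁻¹' U ∈ nhdsFamily S ∧
      (fun x => g⁻¹ * x * g⁻¹⁻¹) ⁻¹' U ∈ nhdsFamily S := by
  obtain ⟨U', hU', p, hp, rfl⟩ := hg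
  obtain ⟨n, hU', hU⟩ := (nhdsStage_mono S).exists_mem_of_mem_iUnion_of_mem_iUnion hU' hU
  have hg : orbitWitness U' p.1 p.2 ∈ orbitWitnesses S (nhdsStage S n) :=
    mem_image2_of_mem hU' hp
  exact ⟨mem_nhdsFamily_of_mem_closureStep S <| .inr <| mem_image2_of_mem (.inl hg) hU,
    mem_nhdsFamily_of_mem_closureStep S <| .inr <|
      mem_image2_of_mem (.inr (inv_mem_inv.2 hg)) hU⟩

theorem conj_mem_nhdsFamily {g : G} (hg : g ∈ subgroup S) {U : Set G}
    (hU : U ∈ nhdsFamily S) : (fun x => g * x * g⁻¹) ⁻¹' U ∈ nhdsFamily S := by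
  induction hg using Subgroup.closure_induction'' generalizing U with
  | mem g hg => exact (conj_mem_nhdsFamily_of_mem_orbitWitnesses S hg hU).1
  | inv_mem g hg => exact (conj_mem_nhdsFamily_of_mem_orbitWitnesses S hg hU).2
  | one => simpa using hU
  | mul a b _ _ ha hb =>
    convert hb (ha hU) using 1
    ext x
    simp [mul_assoc]

theorem orbitWitness_mem_subgroup {U : Set G} {W B : Set X} (hU : U ∈ nhdsFamily S)
    (hW : W ∈ S) (hB : B ∈ S) : orbitWitness U W B ∈ subgroup S :=
  Subgroup.subset_closure (mem_image2_of_mem hU (mk_mem_prod hW hB))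

section Cardinal

variable {κ : Cardinal.{u}} {S}

theorem mk_closureStep_le (hκ : ℵ₀ ≤ κ) (hS : #S ≤ κ) {F : Set (Set G)} (hF : #F ≤ κ) :
    #(closureStep S F) ≤ κ := by
  have hunion {s t : Set (Set G)} (hs : #s ≤ κ) (ht : #t ≤ κ) : #(s ∪ t : Set _) ≤ κ :=
    (mk_union_le s t).trans (add_le_of_le hκ hs ht)
  have hW := mk_orbitWitnesses_le hκ hS hF
  have hW' : #(orbitWitnesses S F ∪ (orbitWitnesses S F)⁻¹ : Set G) ≤ κ :=
    (mk_union_le _ _).trans (add_le_of_le hκ hW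
      ((mk_preimage_of_injective _ _ inv_injective).trans hW))
  exact hunion (hunion (hunion (hunion hF (mk_image2_le.trans (mul_le_of_le hκ hF hF)))
    (mk_image_le.trans hF)) (mk_image_le.trans hF))
    (mk_image2_le.trans (mul_le_of_le hκ hW' hF))

theorem mk_nhdsFamily_le (hκ : ℵ₀ ≤ κ) (hS : #S ≤ κ) : #(nhdsFamily (G := G) S) ≤ κ := by
  refine mk_iUnion_nat_le hκ fun n => ?_
  induction n with
  | zero =>
    refine mk_insert_le.trans (add_le_of_le hκ ?_ (one_le_aleph0.trans hκ))
    exact (mk_le_mk_of_subset (sep_subset _ _)).trans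
      (mk_image2_le.trans (mul_le_of_le hκ hS hS))
  | succ n ih =>
    rw [nhdsStage, Function.iterate_succ_apply']
    exact mk_closureStep_le hκ hS ih

theorem mk_subgroup_le (hκ : ℵ₀ ≤ κ) (hS : #S ≤ κ) : #(subgroup (G := G) S) ≤ κ :=
  Subgroup.cardinalMk_closure_le hκ (mk_orbitWitnesses_le hκ hS (mk_nhdsFamily_le hκ hS))

end Cardinal

variable [IsTopologicalGroup G]

theorem closureStep_subset_nhds {F : Set (Set G)} (hF : F ⊆ (𝓝 (1 : G)).sets) :
    closureStep S F ⊆ (𝓝 (1 : G)).sets := by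
  rintro _ ((((hU | ⟨U, hU, V, hV, rfl⟩) | ⟨U, hU, rfl⟩) | ⟨U, hU, rfl⟩) | ⟨g, -, U, hU, rfl⟩)
  · exact hF hU
  · exact inter_mem (hF hU) (hF hV)
  · exact inv_mem_nhds_one G (hF hU)
  · exact (halfNhds_spec (hF hU)).1
  · exact (by fun_prop : Continuous fun x : G => g * x * g⁻¹).tendsto' 1 1 (by group) (hF hU)

theorem nhdsFamily_subset_nhds : nhdsFamily (G := G) S ⊆ (𝓝 (1 : G)).sets := by
  refine iUnion_subset fun n => ?_
  induction n with
  | zero =>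
    exact insert_subset univ_mem fun O hO => hO.2
  | succ n ih =>
    rw [nhdsStage, Function.iterate_succ_apply']
    exact closureStep_subset_nhds S ih

abbrev groupFilterBasis : GroupFilterBasis (subgroup (G := G) S) where
  sets := (Subtype.val ⁻¹' ·) '' nhdsFamily S
  nonempty := ⟨_, mem_image_of_mem _ (univ_mem_nhdsFamily S)⟩
  inter_sets := by
    rintro _ _ ⟨U, hU, rfl⟩ ⟨V, hV, rfl⟩
    exact ⟨_, mem_image_of_mem _ (inter_mem_nhdsFamily S hU hV), subset_rfl⟩
  one' := by
    rintro _ ⟨U, hU, rfl⟩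
    exact (mem_of_mem_nhds (nhdsFamily_subset_nhds S hU) : (1 : G) ∈ U)
  mul' := by
    rintro _ ⟨U, hU, rfl⟩
    refine ⟨_, mem_image_of_mem _ (halfNhds_mem_nhdsFamily S hU), ?_⟩
    rintro _ ⟨a, ha, b, hb, rfl⟩
    exact (halfNhds_spec (nhdsFamily_subset_nhds S hU)).2 (mul_mem_mul ha hb)
  inv' := by
    rintro _ ⟨U, hU, rfl⟩
    exact ⟨_, mem_image_of_mem _ (inv_mem_nhdsFamily S hU), fun _ hh => hh⟩
  conj' := by
    rintro g _ ⟨U, hU, rfl⟩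
    exact ⟨_, mem_image_of_mem _ (conj_mem_nhdsFamily S g.2 hU), fun _ hh => hh⟩

theorem exists_isTopologicalBasis_card_le {κ : Cardinal.{u}} (hκ : ℵ₀ ≤ κ) (hS : #S ≤ κ) :
    letI := (groupFilterBasis (G := G) S).topology
    ∃ T : Set (Set (subgroup (G := G) S)), #T ≤ κ ∧ IsTopologicalBasis T :=
  letI := (groupFilterBasis (G := G) S).topology
  exists_isTopologicalBasis_card_le_of_hasBasis hκ (mk_subgroup_le hκ hS)
    (mk_image_le.trans (mk_nhdsFamily_le hκ hS)) (groupFilterBasis S).nhds_hasBasis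

variable [TopologicalSpace X]

theorem continuousSMul [ContinuousSMul G X] (hS : IsTopologicalBasis S) :
    letI := (groupFilterBasis (G := G) S).topology
    ContinuousSMul (subgroup (G := G) S) X := by
  let _ := (groupFilterBasis (G := G) S).topology
  have _ := (groupFilterBasis (G := G) S).isTopologicalGroup
  have _ : ContinuousConstSMul (subgroup (G := G) S) X :=
    ⟨fun h => continuous_const_smul (h : G)⟩
  refine continuousSMul_of_continuousAt_one fun x =>
    (continuousAt_smul_one_iff hS x).2 fun V hV hxV => ?_
  obtain ⟨W, hW, hxW, hO⟩ :=
    (continuousAt_smul_one_iff (M := G) hS x).1 continuous_smul.continuousAt V hV hxV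
  exact ⟨W, hW, hxW, (groupFilterBasis S).mem_nhds_one
    ⟨_, basicActionNhds_subset_nhdsFamily S ⟨mem_image2_of_mem hW hV, hO⟩, rfl⟩⟩

theorem isDOpenAction [ContinuousConstSMul G X] (hG : IsDOpenAction G X)
    (hS : IsTopologicalBasis S) :
    letI := (groupFilterBasis (G := G) S).topology
    IsDOpenAction (subgroup (G := G) S) X := by
  let _ := (groupFilterBasis (G := G) S).topology
  refine hG.subgroup (nhdsFamily_subset_nhds S) (fun O hO => ?_) fun U hU =>
    image_smul_subset_closure_of_forall_exists hS fun W hW B hB hex =>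
      ⟨⟨_, orbitWitness_mem_subgroup S hU hW hB⟩, orbitWitness_spec hex⟩
  obtain ⟨_, ⟨U, hU, rfl⟩, hUO⟩ := (groupFilterBasis S).nhds_one_hasBasis.mem_iff.1 hO
  exact ⟨U, hU, hUO⟩

end SmallActingSubgroup

end

/-- Let a topological group `G` act continuously and d-openly on `X`, and
let `κ` be an infinite cardinal such that the topology of `X` has a basis of cardinality at
most `κ`.  Then there is a topological group `H` with `#H ≤ κ`, whose topology has a basis
of cardinality at most `κ`, together with a continuous d-open action of `H` on `X`. -/
theorem exists_small_group_with_dOpen_action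
    {G X : Type u} [Group G] [TopologicalSpace G] [IsTopologicalGroup G]
    [TopologicalSpace X] [MulAction G X] [ContinuousSMul G X]
    (κ : Cardinal.{u}) (hκ : Cardinal.aleph0 ≤ κ)
    (hbasis : ∃ S : Set (Set X), #S ≤ κ ∧ IsTopologicalBasis S)
    (hdopen : ∀ x : X, ∀ O ∈ 𝓝 (1 : G),
      x ∈ interior (closure ((fun g : G => g • x) '' O))) :
    ∃ (H : Type u) (_ : Group H) (_ : TopologicalSpace H) (_ : IsTopologicalGroup H)
      (_ : MulAction H X),
      ContinuousSMul H X ∧ #H ≤ κ ∧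
      (∃ S : Set (Set H), #S ≤ κ ∧ IsTopologicalBasis S) ∧
      (∀ x : X, ∀ O ∈ 𝓝 (1 : H),
        x ∈ interior (closure ((fun h : H => h • x) '' O))) := by
  obtain ⟨S, hScard, hS⟩ := hbasis
  open SmallActingSubgroup in
  exact ⟨subgroup S, inferInstance, (groupFilterBasis S).topology,
    (groupFilterBasis S).isTopologicalGroup, inferInstance, continuousSMul S hS,
    mk_subgroup_le hκ hScard, exists_isTopologicalBasis_card_le S hκ hScard,
    isDOpenAction S hdopen hS⟩
end
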